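/- arXiv:2306.07829 — 3 statements merged into one kernel-verified Lean document; each statement's English description precedes it below -/
import Mathlib

section
/- For any permutation σ in the symmetric group S_{n+k-1} (with n, k ≥ 1) and any index i with 1 ≤ i ≤ n, there exists at most one pair (τ, ν) with τ ∈ S_n and ν ∈ S_k such that τ ∘_i ν = σ, where ∘_i denotes the operadic partial composition of permutations. -/
/-- The value (as a natural number) at `x` of the operadic partial composition `τ ∘ᵢ ν`
of permutations: the block `{i, …, i+k-1}` is permuted by `ν` (shifted by `i`) and the
resulting blocks (one of size `k` and `n-1` singletons) are permuted according to `τ`. -/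
def partialCompFun (n k : ℕ) (hk : 0 < k) (i : Fin n)
    (τ : Equiv.Perm (Fin n)) (ν : Equiv.Perm (Fin k))
    (x : Fin (n + k - 1)) : ℕ :=
  if h : i.val ≤ x.val ∧ x.val < i.val + k then
    (τ i).val + (ν ⟨x.val - i.val, by omega⟩).val
  else
    let m : Fin n :=
      if h2 : x.val < i.val then ⟨x.val, by have := i.isLt; omega⟩
      else ⟨x.val - (k - 1), by have := x.isLt; have := i.isLt; omega⟩
    if (τ i).val < (τ m).val then (τ m).val + (k - 1) else (τ m).val

/-- `σ` is the operadic partial composition `τ ∘ᵢ ν`. -/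
def IsPartialComp (n k : ℕ) (hk : 0 < k) (i : Fin n)
    (τ : Equiv.Perm (Fin n)) (ν : Equiv.Perm (Fin k))
    (σ : Equiv.Perm (Fin (n + k - 1))) : Prop :=
  ∀ x, (σ x).val = partialCompFun n k hk i τ ν x

/-!
On the block `{i, …, i+k-1}` the composite takes the values `τ i + ν j`; since `ν` attains `0`,
`τ i` is the minimum of `σ` on the block, and then `ν j = σ (i + j) - τ i`. Off the block, `σ`
takes the value `τ m` shifted up by `k - 1` exactly when `τ m > τ i`, and this shift is injective,
so `τ m` is recovered as well.
-/

lemma partialCompFun_block (n k : ℕ) (hk : 0 < k) (i : Fin n)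
    (τ : Equiv.Perm (Fin n)) (ν : Equiv.Perm (Fin k))
    (j : Fin k) (hx : i.val + j.val < n + k - 1) :
    partialCompFun n k hk i τ ν ⟨i.val + j.val, hx⟩ = (τ i).val + (ν j).val := by
  have hblock : i.val ≤ i.val + j.val ∧ i.val + j.val < i.val + k := by omega
  simp only [partialCompFun, dif_pos hblock, Nat.add_sub_cancel_left]

lemma exists_partialCompFun_eq_of_ne (n k : ℕ) (hk : 0 < k) {i m : Fin n} (hm : m ≠ i) :
    ∃ x : Fin (n + k - 1), ∀ (τ : Equiv.Perm (Fin n)) (ν : Equiv.Perm (Fin k)),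
      partialCompFun n k hk i τ ν x =
        if (τ i).val < (τ m).val then (τ m).val + (k - 1) else (τ m).val := by
  have hm' : m.val ≠ i.val := Fin.val_ne_of_ne hm
  rcases Nat.lt_or_gt_of_ne hm' with hlt | hgt
  · refine ⟨⟨m.val, by omega⟩, fun τ ν => ?_⟩
    have hout : ¬ (i.val ≤ m.val ∧ m.val < i.val + k) := by omega
    simp only [partialCompFun, dif_neg hout, dif_pos hlt, Fin.eta]
  · refine ⟨⟨m.val + (k - 1), by omega⟩, fun τ ν => ?_⟩
    have hout : ¬ (i.val ≤ m.val + (k - 1) ∧ m.val + (k - 1) < i.val + k) := by omega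
    have hnlt : ¬ m.val + (k - 1) < i.val := by omega
    simp only [partialCompFun, dif_neg hout, dif_neg hnlt, Nat.add_sub_cancel, Fin.eta]

lemma ite_lt_add_injective (c d : ℕ) :
    Function.Injective fun a : ℕ => if c < a then a + d else a := by
  intro a b hab
  dsimp only at hab
  split_ifs at hab <;> omega

namespace IsPartialComp

variable {n k : ℕ} {hk : 0 < k} {i : Fin n} {σ : Equiv.Perm (Fin (n + k - 1))}
  {τ τ' : Equiv.Perm (Fin n)} {ν ν' : Equiv.Perm (Fin k)}

lemma apply_block (h : IsPartialComp n k hk i τ ν σ) (j : Fin k)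
    (hx : i.val + j.val < n + k - 1) :
    (σ ⟨i.val + j.val, hx⟩).val = (τ i).val + (ν j).val := by
  rw [h, partialCompFun_block]

lemma val_apply_le (h : IsPartialComp n k hk i τ ν σ) (h' : IsPartialComp n k hk i τ' ν' σ) :
    (τ' i).val ≤ (τ i).val := by
  obtain ⟨j, hj⟩ : ∃ j : Fin k, ν j = ⟨0, hk⟩ := ν.surjective _
  have hx : i.val + j.val < n + k - 1 := by omega
  have hσ := h.apply_block j hx
  have hσ' := h'.apply_block j hx
  rw [hj] at hσ
  simp only at hσ
  omega

lemma apply_self_eq (h : IsPartialComp n k hk i τ ν σ) (h' : IsPartialComp n k hk i τ' ν' σ) :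
    τ i = τ' i :=
  Fin.ext (le_antisymm (h'.val_apply_le h) (h.val_apply_le h'))

end IsPartialComp

theorem partialComp_unique_general (n k : ℕ) (hk : 0 < k) (i : Fin n)
    (σ : Equiv.Perm (Fin (n + k - 1)))
    (τ τ' : Equiv.Perm (Fin n)) (ν ν' : Equiv.Perm (Fin k))
    (h1 : IsPartialComp n k hk i τ ν σ) (h2 : IsPartialComp n k hk i τ' ν' σ) :
    τ = τ' ∧ ν = ν' := by
  have hτi : τ i = τ' i := h1.apply_self_eq h2
  constructor
  · ext m
    by_cases hm : m = i
    · rw [hm, hτi]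
    · obtain ⟨x, hx⟩ := exists_partialCompFun_eq_of_ne n k hk hm
      have hσ : partialCompFun n k hk i τ ν x = partialCompFun n k hk i τ' ν' x := by
        rw [← h1 x, ← h2 x]
      rw [hx, hx, hτi] at hσ
      exact ite_lt_add_injective (τ' i).val (k - 1) hσ
  · ext j
    have hx : i.val + j.val < n + k - 1 := by omega
    have hσ := h1.apply_block j hx
    rw [h2.apply_block j hx, hτi] at hσ
    omega

/-- For any permutation `σ ∈ S_{n+k-1}` and any `i`, there is at most one pair `(τ, ν)`
with `τ ∈ S_n`, `ν ∈ S_k` such that `τ ∘ᵢ ν = σ`. -/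
theorem partialComp_unique (n k : ℕ) (hn : 0 < n) (hk : 0 < k) (i : Fin n)
    (σ : Equiv.Perm (Fin (n + k - 1)))
    (τ τ' : Equiv.Perm (Fin n)) (ν ν' : Equiv.Perm (Fin k))
    (h1 : IsPartialComp n k hk i τ ν σ) (h2 : IsPartialComp n k hk i τ' ν' σ) :
    τ = τ' ∧ ν = ν' :=
  partialComp_unique_general n k hk i σ τ τ' ν ν' h1 h2
end

section
/- A permutation σ ∈ S_{n+k-1} admits a decomposition σ = τ ∘_i ν with τ ∈ S_n and ν ∈ S_k if and only if the image σ({i, i+1, ..., i+k-1}) of the block is a set of k consecutive integers and σ restricted to the complement {1,...,n+k-1} \ {i,...,i+k-1} is order-isomorphic to a permutation of n-1 elements consistent with removing that block; equivalently, σ maps the interval {i,...,i+k-1} onto an interval of length k. -/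
/-!
Collapsing the block `[i, i + k)` to the point `i` identifies its complement in `Fin (n + k - 1)`
with `Fin n \ {i}`, and `expand` is the inverse identification. In these terms `τ ∘ᵢ ν` maps the
block onto `[τ i, τ i + k)` by `ν` and every other point `x` to `expand (τ i) (τ (collapse i x))`,
which lies outside that interval. Conversely, if `σ` maps the block onto `[j, j + k)`, then
`ν y = σ (i + y) - j` and `τ = collapse j ∘ σ ∘ expand i` are permutations with `σ = τ ∘ᵢ ν`;
`collapse i ∘ σ⁻¹ ∘ expand j` is a left inverse of `τ`.
-/

namespace PartialComp

def collapse (i k x : ℕ) : ℕ :=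
  if x < i then x else if x < i + k then i else x - (k - 1)

def expand (i k m : ℕ) : ℕ :=
  if i < m then m + (k - 1) else m

section Nat

variable {i k : ℕ}

theorem collapse_expand (m : ℕ) : collapse i k (expand i k m) = m := by
  unfold collapse expand
  split_ifs <;> omega

theorem expand_collapse {x : ℕ} (hx : ¬(i ≤ x ∧ x < i + k)) : expand i k (collapse i k x) = x := by
  unfold collapse expand
  split_ifs <;> omega

theorem collapse_of_mem_block {x : ℕ} (hx : i ≤ x ∧ x < i + k) : collapse i k x = i := by
  unfold collapse
  split_ifs <;> omega

theorem collapse_ne_of_not_mem_block (hk : 0 < k) {x : ℕ} (hx : ¬(i ≤ x ∧ x < i + k)) :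
    collapse i k x ≠ i := by
  unfold collapse
  split_ifs <;> omega

theorem expand_mem_block_iff (hk : 0 < k) {m : ℕ} :
    (i ≤ expand i k m ∧ expand i k m < i + k) ↔ m = i := by
  unfold expand
  split_ifs <;> omega

theorem collapse_lt {n x : ℕ} (hi : i < n) (hx : x < n + k - 1) : collapse i k x < n := by
  unfold collapse
  split_ifs <;> omega

theorem expand_lt (hk : 0 < k) {n m : ℕ} (hm : m < n) : expand i k m < n + k - 1 := by
  unfold expand
  split_ifs <;> omega

end Nat

variable {n k : ℕ}

def collapseFin (i : Fin n) (k : ℕ) (x : Fin (n + k - 1)) : Fin n :=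
  ⟨collapse i k x, collapse_lt i.isLt x.isLt⟩

def expandFin (hk : 0 < k) (i : ℕ) (m : Fin n) : Fin (n + k - 1) :=
  ⟨expand i k m, expand_lt hk m.isLt⟩

section FinBlock

variable {hk : 0 < k} {i : Fin n}

theorem collapseFin_expandFin (m : Fin n) : collapseFin i k (expandFin hk i m) = m :=
  Fin.ext (collapse_expand m)

theorem expandFin_collapseFin {x : Fin (n + k - 1)} (hx : ¬(i.val ≤ x.val ∧ x.val < i.val + k)) :
    expandFin hk i (collapseFin i k x) = x :=
  Fin.ext (expand_collapse hx)

theorem collapseFin_of_mem_block {x : Fin (n + k - 1)} (hx : i.val ≤ x.val ∧ x.val < i.val + k) :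
    collapseFin i k x = i :=
  Fin.ext (collapse_of_mem_block hx)

end FinBlock

section PartialCompFun

variable (hk : 0 < k) (i : Fin n) (τ : Equiv.Perm (Fin n)) (ν : Equiv.Perm (Fin k))
  {x : Fin (n + k - 1)}

theorem partialCompFun_of_mem_block (hx : i.val ≤ x.val ∧ x.val < i.val + k) :
    partialCompFun n k hk i τ ν x = (τ i).val + (ν ⟨x.val - i.val, by omega⟩).val :=
  dif_pos hx

theorem partialCompFun_of_not_mem_block (hx : ¬(i.val ≤ x.val ∧ x.val < i.val + k)) :
    partialCompFun n k hk i τ ν x = expand (τ i) k (τ (collapseFin i k x)) := by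
  have hm : (if h : x.val < i.val then (⟨x.val, by omega⟩ : Fin n)
      else ⟨x.val - (k - 1), by omega⟩) = collapseFin i k x := by
    ext
    unfold collapseFin collapse
    split_ifs <;> simp_all
  simp only [partialCompFun, dif_neg hx, hm, expand]

theorem partialCompFun_mem_block_iff :
    ((τ i).val ≤ partialCompFun n k hk i τ ν x ∧ partialCompFun n k hk i τ ν x < (τ i).val + k) ↔
      (i.val ≤ x.val ∧ x.val < i.val + k) := by
  by_cases hx : i.val ≤ x.val ∧ x.val < i.val + k
  · rw [partialCompFun_of_mem_block hk i τ ν hx]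
    have := (ν ⟨x.val - i.val, by omega⟩).isLt
    exact iff_of_true (by omega) hx
  · rw [partialCompFun_of_not_mem_block hk i τ ν hx, expand_mem_block_iff hk]
    have hne : collapseFin i k x ≠ i := fun h =>
      collapse_ne_of_not_mem_block hk hx (congrArg Fin.val h)
    exact iff_of_false (fun h => hne (τ.injective (Fin.ext h))) hx

end PartialCompFun

def MapsBlockOnto {N : ℕ} (k : ℕ) (σ : Equiv.Perm (Fin N)) (i j : ℕ) : Prop :=
  ∀ x, (i ≤ x.val ∧ x.val < i + k) ↔ (j ≤ (σ x).val ∧ (σ x).val < j + k)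

theorem MapsBlockOnto.symm {N : ℕ} {σ : Equiv.Perm (Fin N)} {i j : ℕ}
    (hσ : MapsBlockOnto k σ i j) : MapsBlockOnto k σ.symm j i := fun x => by
  simpa using (hσ (σ.symm x)).symm

theorem exists_perm_val_eq_sub_of_mapsBlockOnto {N i j : ℕ} {σ : Equiv.Perm (Fin N)}
    (hi : i + k ≤ N) (hσ : MapsBlockOnto k σ i j) :
    ∃ ν : Equiv.Perm (Fin k), ∀ y : Fin k, (ν y).val = (σ ⟨i + y.val, by omega⟩).val - j := by
  have hblock (y : Fin k) := (hσ ⟨i + y.val, by omega⟩).1 (by simp only; omega)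
  let g (y : Fin k) : Fin k := ⟨(σ ⟨i + y.val, by omega⟩).val - j, by have := hblock y; omega⟩
  have hg : Function.Injective g := by
    intro a b hab
    have ha := hblock a
    have hb := hblock b
    have hval : (σ ⟨i + a.val, by omega⟩).val = (σ ⟨i + b.val, by omega⟩).val := by
      have := congrArg Fin.val hab
      simp only [g] at this
      omega
    have := congrArg Fin.val (σ.injective (Fin.ext hval))
    simp only at this
    exact Fin.ext (by omega)
  exact ⟨Equiv.ofBijective g (Finite.injective_iff_bijective.mp hg), fun _ => rfl⟩

section MapsBlockOnto

variable (hk : 0 < k) {i j : Fin n} {σ : Equiv.Perm (Fin (n + k - 1))}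

theorem collapseFin_apply_expandFin_self (hσ : MapsBlockOnto k σ i j) :
    collapseFin j k (σ (expandFin hk i i)) = j :=
  collapseFin_of_mem_block ((hσ _).1 ((expand_mem_block_iff hk).2 rfl))

theorem exists_perm_eq_collapseFin_of_mapsBlockOnto (hσ : MapsBlockOnto k σ i j) :
    ∃ τ : Equiv.Perm (Fin n), ∀ m, τ m = collapseFin j k (σ (expandFin hk i m)) := by
  let f (m : Fin n) := collapseFin j k (σ (expandFin hk i m))
  have hf : Function.LeftInverse (fun m => collapseFin i k (σ.symm (expandFin hk j m))) f := by
    intro m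
    by_cases hm : m = i
    · subst hm
      simp only [f, collapseFin_apply_expandFin_self hk hσ]
      exact collapseFin_apply_expandFin_self hk hσ.symm
    · have hout := (expand_mem_block_iff hk (i := i.val) (k := k)).not.2 (fun h => hm (Fin.ext h))
      have hσout := (hσ (expandFin hk i m)).not.1 hout
      simp only [f, expandFin_collapseFin hσout, Equiv.symm_apply_apply, collapseFin_expandFin]
  exact ⟨Equiv.ofBijective f (Finite.injective_iff_bijective.mp hf.injective), fun _ => rfl⟩

theorem exists_isPartialComp_of_mapsBlockOnto (hσ : MapsBlockOnto k σ i j) :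
    ∃ τ ν, IsPartialComp n k hk i τ ν σ := by
  obtain ⟨ν, hν⟩ := exists_perm_val_eq_sub_of_mapsBlockOnto (by omega) hσ
  obtain ⟨τ, hτ⟩ := exists_perm_eq_collapseFin_of_mapsBlockOnto hk hσ
  have hτi : τ i = j := (hτ i).trans (collapseFin_apply_expandFin_self hk hσ)
  refine ⟨τ, ν, fun x => ?_⟩
  by_cases hx : i.val ≤ x.val ∧ x.val < i.val + k
  · have hσx := (hσ x).1 hx
    rw [partialCompFun_of_mem_block hk i τ ν hx, hτi, hν]
    simp only [Nat.add_sub_cancel' hx.1, Fin.eta]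
    omega
  · rw [partialCompFun_of_not_mem_block hk i τ ν hx, hτi, hτ, expandFin_collapseFin hx]
    exact (expand_collapse ((hσ x).not.1 hx)).symm

end MapsBlockOnto

end PartialComp

theorem partialComp_admissible_iff_general (n k : ℕ) (hk : 0 < k) (i : Fin n)
    (σ : Equiv.Perm (Fin (n + k - 1))) :
    (∃ (τ : Equiv.Perm (Fin n)) (ν : Equiv.Perm (Fin k)), IsPartialComp n k hk i τ ν σ) ↔
    (∃ j : ℕ, j + k ≤ n + k - 1 ∧
      ∀ x : Fin (n + k - 1),
        (i.val ≤ x.val ∧ x.val < i.val + k) ↔ (j ≤ (σ x).val ∧ (σ x).val < j + k)) := by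
  constructor
  · rintro ⟨τ, ν, hσ⟩
    refine ⟨τ i, by omega, fun x => ?_⟩
    rw [hσ x]
    exact (PartialComp.partialCompFun_mem_block_iff hk i τ ν).symm
  · rintro ⟨j, hj, hσ⟩
    exact PartialComp.exists_isPartialComp_of_mapsBlockOnto (j := ⟨j, by omega⟩) hk hσ

/-- A permutation `σ ∈ S_{n+k-1}` admits a decomposition `σ = τ ∘ᵢ ν` with `τ ∈ S_n`,
`ν ∈ S_k` (i.e. is `(n,k,i)`-admissible) if and only if `σ` maps the interval
`{i, …, i+k-1}` onto an interval of length `k`. -/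
theorem partialComp_admissible_iff (n k : ℕ) (hn : 0 < n) (hk : 0 < k) (i : Fin n)
    (σ : Equiv.Perm (Fin (n + k - 1))) :
    (∃ (τ : Equiv.Perm (Fin n)) (ν : Equiv.Perm (Fin k)), IsPartialComp n k hk i τ ν σ) ↔
    (∃ j : ℕ, j + k ≤ n + k - 1 ∧
      ∀ x : Fin (n + k - 1),
        (i.val ≤ x.val ∧ x.val < i.val + k) ↔ (j ≤ (σ x).val ∧ (σ x).val < j + k)) :=
  partialComp_admissible_iff_general n k hk i σ
end

section
/- For any σ ∈ S_{n+k-1} that is (n,k,i)-admissible with decomposition σ = σ^{(1)} ∘_i σ^{(2)} (σ^{(1)} ∈ S_n, σ^{(2)} ∈ S_k), the sign of σ satisfies sgn(σ) = sgn(σ^{(2)}) · sgn(β(σ^{(1)})), where β(σ^{(1)}) ∈ S_{n+k-1} is the block permutation obtained from σ^{(1)} by replacing the i-th strand by a block of k parallel strands (i.e., σ^{(1)} ∘_i id_k). -/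
/-!
Substituting `ν * μ` into the `i`-th input amounts to first permuting the `i`-th block by `μ`
and then substituting `ν`. With `ν = id` this factors `τ ∘ᵢ μ` as `(τ ∘ᵢ id) * μ'`, where
`μ'` acts as `μ` on the block `{i, …, i+k-1}` and fixes everything else; extending a
permutation by the identity preserves its sign.
-/

open Equiv

def blockEquiv (n k : ℕ) (i : Fin n) :
    Fin k ≃ {x : Fin (n + k - 1) // i.val ≤ x.val ∧ x.val < i.val + k} where
  toFun y := ⟨⟨i + y, by omega⟩, by simp⟩
  invFun x := ⟨x.1 - i, by omega⟩
  left_inv y := by ext; simp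
  right_inv x := by ext; simp; omega

section

variable {n k : ℕ} {hk : 0 < k} {i : Fin n} {τ : Perm (Fin n)} {ν μ : Perm (Fin k)}

theorem partialCompFun_mul (x : Fin (n + k - 1)) :
    partialCompFun n k hk i τ (ν * μ) x =
      partialCompFun n k hk i τ ν (μ.extendDomain (blockEquiv n k i) x) := by
  by_cases hx : i.val ≤ x.val ∧ x.val < i.val + k
  · have hμx : (μ.extendDomain (blockEquiv n k i) x).val = i + μ ⟨x - i, by omega⟩ :=
      congrArg Fin.val (Perm.extendDomain_apply_subtype μ (blockEquiv n k i) hx)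
    have hμx_mem : i.val ≤ (μ.extendDomain (blockEquiv n k i) x).val ∧
        (μ.extendDomain (blockEquiv n k i) x).val < i.val + k := by
      rw [hμx]; omega
    rw [partialCompFun, partialCompFun, dif_pos hx, dif_pos hμx_mem]
    simp only [hμx, Perm.mul_apply, add_tsub_cancel_left]
  · rw [Perm.extendDomain_apply_not_subtype μ (blockEquiv n k i) hx, partialCompFun,
      partialCompFun, dif_neg hx, dif_neg hx]

theorem IsPartialComp.eq_mul_extendDomain {σ ρ : Perm (Fin (n + k - 1))}
    (hσ : IsPartialComp n k hk i τ (ν * μ) σ) (hρ : IsPartialComp n k hk i τ ν ρ) :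
    σ = ρ * μ.extendDomain (blockEquiv n k i) :=
  Perm.ext fun x => Fin.ext <| by rw [hσ x, Perm.mul_apply, hρ, partialCompFun_mul]

end

theorem sign_partialComp_general (n k : ℕ) (hk : 0 < k) (i : Fin n)
    (σ β : Equiv.Perm (Fin (n + k - 1)))
    (σ₁ : Equiv.Perm (Fin n)) (σ₂ : Equiv.Perm (Fin k))
    (hσ : IsPartialComp n k hk i σ₁ σ₂ σ)
    (hβ : IsPartialComp n k hk i σ₁ (1 : Equiv.Perm (Fin k)) β) :
    Equiv.Perm.sign σ = Equiv.Perm.sign σ₂ * Equiv.Perm.sign β := by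
  rw [← one_mul σ₂] at hσ
  rw [hσ.eq_mul_extendDomain hβ, map_mul, Perm.sign_extendDomain, mul_comm]

/-- For any `(n,k,i)`-admissible `σ ∈ S_{n+k-1}` with decomposition
`σ = σ⁽¹⁾ ∘ᵢ σ⁽²⁾` (`σ⁽¹⁾ ∈ S_n`, `σ⁽²⁾ ∈ S_k`), the sign of `σ` satisfies
`sgn(σ) = sgn(σ⁽²⁾) · sgn(β(σ⁽¹⁾))`, where `β(σ⁽¹⁾) = σ⁽¹⁾ ∘ᵢ id_k ∈ S_{n+k-1}` is the
block permutation obtained by replacing the `i`-th strand of `σ⁽¹⁾` by `k` parallel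
strands. -/
theorem sign_partialComp (n k : ℕ) (hn : 0 < n) (hk : 0 < k) (i : Fin n)
    (σ β : Equiv.Perm (Fin (n + k - 1)))
    (σ₁ : Equiv.Perm (Fin n)) (σ₂ : Equiv.Perm (Fin k))
    (hσ : IsPartialComp n k hk i σ₁ σ₂ σ)
    (hβ : IsPartialComp n k hk i σ₁ (1 : Equiv.Perm (Fin k)) β) :
    Equiv.Perm.sign σ = Equiv.Perm.sign σ₂ * Equiv.Perm.sign β :=
  sign_partialComp_general n k hk i σ β σ₁ σ₂ hσ hβ
end
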